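/- Define μ(y) = κ e^{−h·y} W(y) for y ∈ K∩ℤ^d, where κ = (Σ_{y∈K∩ℤ^d} e^{−h·y} W(y))^{−1}. Then μ is a probability distribution on K∩ℤ^d satisfying Σ_{x∈K∩ℤ^d} μ(x) ℙ(x + X = y) = c μ(y) for every y ∈ K∩ℤ^d; consequently, for every n ≥ 1 and every y ∈ K∩ℤ^d, Σ_{x∈K∩ℤ^d} μ(x) ℙ(x + S(n) = y, τ_x > n) = c^n μ(y), so Σ_{x∈K∩ℤ^d} μ(x) ℙ(τ_x > n) = c^n and μ is quasistationary: Σ_{x∈K∩ℤ^d} μ(x) ℙ(x + S(n) = y, τ_x > n) / Σ_{x∈K∩ℤ^d} μ(x) ℙ(τ_x > n) = μ(y) for all n ≥ 1 and y ∈ K∩ℤ^d. -/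

import Mathlib

open MeasureTheory ProbabilityTheory Filter Topology
open scoped Classical

noncomputable section

/-- The embedding of the lattice `ℤ^d` into `ℝ^d`. -/
def embZ (d : ℕ) (z : Fin d → ℤ) : EuclideanSpace ℝ (Fin d) := WithLp.toLp 2 (fun i => (z i : ℝ))

/-- The random walk `S(n) = X(1) + ⋯ + X(n)` (indexed from 0). -/
def walk {Ω : Type*} {d : ℕ} (X : ℕ → Ω → (Fin d → ℤ)) (n : ℕ) (ω : Ω) : Fin d → ℤ :=
  ∑ k ∈ Finset.range n, X k ω

/-- The dot product `h · z` of `h ∈ ℝ^d` and `z ∈ ℤ^d`. -/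
def dotZ {d : ℕ} (h : EuclideanSpace ℝ (Fin d)) (z : Fin d → ℤ) : ℝ :=
  ∑ i, h i * (z i : ℝ)

/-- The event `{τ_x > n} = {∀ k ≤ n, x + S(k) ∈ K}`. -/
def stayEvent {Ω : Type*} {d : ℕ} (X : ℕ → Ω → (Fin d → ℤ))
    (K : Set (EuclideanSpace ℝ (Fin d))) (x : Fin d → ℤ) (n : ℕ) : Set Ω :=
  {ω | ∀ k ≤ n, embZ d (x + walk X k ω) ∈ K}

section AuxLemmas

set_option linter.unusedSectionVars false

variable {d : ℕ} {Ω : Type*} [MeasurableSpace Ω]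

lemma walk_meas (X : ℕ → Ω → (Fin d → ℤ)) (hX : ∀ n, Measurable (X n)) (n : ℕ) :
    Measurable (walk X n) := Finset.measurable_sum _ (fun i _ => hX i)

lemma walk_succ (X : ℕ → Ω → (Fin d → ℤ)) (n : ℕ) (ω : Ω) :
    walk X (n+1) ω = walk X n ω + X n ω := Finset.sum_range_succ _ _

lemma walk_zero (X : ℕ → Ω → (Fin d → ℤ)) (ω : Ω) : walk X 0 ω = 0 := Finset.sum_range_zero _

lemma walk_one (X : ℕ → Ω → (Fin d → ℤ)) (ω : Ω) : walk X 1 ω = X 0 ω := Finset.sum_range_one _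

lemma stay_meas (X : ℕ → Ω → (Fin d → ℤ)) (hX : ∀ n, Measurable (X n))
    (K : Set (EuclideanSpace ℝ (Fin d))) (x : Fin d → ℤ) (n : ℕ) :
    MeasurableSet (stayEvent X K x n) := by
  have h : stayEvent X K x n = ⋂ k, ⋂ _ : k ≤ n, walk X k ⁻¹' {v | embZ d (x + v) ∈ K} := by
    ext ω; simp [stayEvent, Set.mem_iInter]
  rw [h]
  exact MeasurableSet.iInter fun k => MeasurableSet.iInter fun _ =>
    walk_meas X hX k (Set.to_countable _).measurableSet

lemma hitstay_meas (X : ℕ → Ω → (Fin d → ℤ)) (hX : ∀ n, Measurable (X n))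
    (K : Set (EuclideanSpace ℝ (Fin d))) (x y : Fin d → ℤ) (n : ℕ) :
    MeasurableSet ({ω | x + walk X n ω = y} ∩ stayEvent X K x n) := by
  refine MeasurableSet.inter ?_ (stay_meas X hX K x n)
  have h : {ω | x + walk X n ω = y} = walk X n ⁻¹' {v | x + v = y} := rfl
  rw [h]; exact walk_meas X hX n (Set.to_countable _).measurableSet

lemma dotZ_sub (h : EuclideanSpace ℝ (Fin d)) (a b : Fin d → ℤ) :
    dotZ h (a - b) = dotZ h a - dotZ h b := by
  simp only [dotZ, ← Finset.sum_sub_distrib]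
  refine Finset.sum_congr rfl fun i _ => ?_
  have : ((a - b) i : ℝ) = (a i : ℝ) - (b i : ℝ) := by push_cast [Pi.sub_apply]; ring
  rw [this]; ring

lemma step_indep (P : Measure Ω) (X : ℕ → Ω → (Fin d → ℤ)) (hXmeas : ∀ n, Measurable (X n))
    (hXindep : iIndepFun X P)
    (K : Set (EuclideanSpace ℝ (Fin d))) (x z w : Fin d → ℤ) (n : ℕ) :
    P (({ω | x + walk X n ω = z} ∩ stayEvent X K x n) ∩ {ω | X n ω = w})
      = P ({ω | x + walk X n ω = z} ∩ stayEvent X K x n) * P {ω | X n ω = w} := by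
  have hdisj : Disjoint (Finset.range n) ({n} : Finset ℕ) := by simp
  have hInd := hXindep.indepFun_finset (Finset.range n) {n} hdisj hXmeas
  set g1 : Ω → (↑(Finset.range n) → (Fin d → ℤ)) := fun a i => X i a with hg1
  set g2 : Ω → (↑({n} : Finset ℕ) → (Fin d → ℤ)) := fun a i => X i a with hg2
  set s : Set (↑(Finset.range n) → (Fin d → ℤ)) :=
    {v | x + (∑ i : ↑(Finset.range n), if (i : ℕ) < n then v i else 0) = z ∧
      ∀ k ≤ n, embZ d (x + ∑ i : ↑(Finset.range n), if (i : ℕ) < k then v i else 0) ∈ K} with hs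
  set t : Set (↑({n} : Finset ℕ) → (Fin d → ℤ)) := {v | v ⟨n, Finset.mem_singleton_self n⟩ = w}
    with ht
  have hpsum : ∀ k ≤ n, ∀ a : Ω,
      (∑ i : ↑(Finset.range n), if (i : ℕ) < k then X (i : ℕ) a else 0) = walk X k a := by
    intro k hk a
    rw [Finset.univ_eq_attach,
      Finset.sum_attach (Finset.range n) (fun j => if j < k then X j a else 0),
      ← Finset.sum_filter]
    have h2 : (Finset.range n).filter (fun j => j < k) = Finset.range k := by
      ext j; simp; omega
    rw [h2]; rfl
  have hA : {ω | x + walk X n ω = z} ∩ stayEvent X K x n = g1 ⁻¹' s := by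
    ext a
    simp only [Set.mem_inter_iff, Set.mem_setOf_eq, Set.mem_preimage, stayEvent, hs, hg1]
    constructor
    · rintro ⟨h1, h2⟩
      exact ⟨by rw [hpsum n le_rfl]; exact h1, fun k hk => by rw [hpsum k hk]; exact h2 k hk⟩
    · rintro ⟨h1, h2⟩
      rw [hpsum n le_rfl] at h1
      exact ⟨h1, fun k hk => by have := h2 k hk; rwa [hpsum k hk] at this⟩
  have hB : {ω | X n ω = w} = g2 ⁻¹' t := rfl
  rw [hA, hB]
  exact hInd.measure_inter_preimage_eq_mul s t (s.to_countable.measurableSet)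
    (t.to_countable.measurableSet)

lemma ident_eval (P : Measure Ω) (X : ℕ → Ω → (Fin d → ℤ))
    (hXident : ∀ n, IdentDistrib (X n) (X 0) P P) (n : ℕ) (w : Fin d → ℤ) :
    P {ω | X n ω = w} = P {ω | X 0 ω = w} :=
  (hXident n).measure_mem_eq (Set.to_countable {w}).measurableSet

lemma chapman (P : Measure Ω) (X : ℕ → Ω → (Fin d → ℤ)) (hXmeas : ∀ n, Measurable (X n))
    (hXindep : iIndepFun X P)
    (hXident : ∀ n, IdentDistrib (X n) (X 0) P P)
    (K : Set (EuclideanSpace ℝ (Fin d))) (x y : Fin d → ℤ) (hy : embZ d y ∈ K) (n : ℕ) :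
    P ({ω | x + walk X (n+1) ω = y} ∩ stayEvent X K x (n+1))
      = ∑' z : Fin d → ℤ,
          P ({ω | x + walk X n ω = z} ∩ stayEvent X K x n) * P {ω | X 0 ω = y - z} := by
  have hdec : {ω | x + walk X (n+1) ω = y} ∩ stayEvent X K x (n+1)
      = ⋃ z : Fin d → ℤ,
          (({ω | x + walk X n ω = z} ∩ stayEvent X K x n) ∩ {ω | X n ω = y - z}) := by
    ext ω
    simp only [Set.mem_inter_iff, Set.mem_setOf_eq, Set.mem_iUnion, stayEvent]
    constructor
    · rintro ⟨h1, h2⟩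
      refine ⟨x + walk X n ω, ⟨rfl, fun k hk => h2 k (le_trans hk (Nat.le_succ n))⟩, ?_⟩
      rw [walk_succ] at h1
      rw [← h1]; abel
    · rintro ⟨z, ⟨hwz, hst⟩, hXn⟩
      have h1 : x + walk X (n+1) ω = y := by
        rw [walk_succ, ← add_assoc, hwz, hXn]; abel
      refine ⟨h1, fun k hk => ?_⟩
      rcases (by omega : k ≤ n ∨ k = n + 1) with hcase | hcase
      · exact hst k hcase
      · rw [hcase, h1]; exact hy
  have hdisj : Pairwise (Function.onFun Disjoint (fun z : Fin d → ℤ =>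
      (({ω | x + walk X n ω = z} ∩ stayEvent X K x n) ∩ {ω | X n ω = y - z}))) := by
    intro z z' hzz'
    refine Set.disjoint_left.2 fun ω hω hω' => hzz' ?_
    have h1 : x + walk X n ω = z := hω.1.1
    have h2 : x + walk X n ω = z' := hω'.1.1
    rw [← h1, ← h2]
  have hmeas : ∀ z : Fin d → ℤ, MeasurableSet
      (({ω | x + walk X n ω = z} ∩ stayEvent X K x n) ∩ {ω | X n ω = y - z}) := by
    intro z
    refine (hitstay_meas X hXmeas K x z n).inter ?_
    have h : {ω | X n ω = y - z} = X n ⁻¹' {y - z} := rfl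
    rw [h]; exact hXmeas n (Set.to_countable _).measurableSet
  rw [hdec, measure_iUnion hdisj hmeas]
  exact tsum_congr fun z => by
    rw [step_indep P X hXmeas hXindep K x z (y - z) n, ident_eval P X hXident n (y - z)]

lemma stay_decomp (P : Measure Ω) (X : ℕ → Ω → (Fin d → ℤ)) (hXmeas : ∀ n, Measurable (X n))
    (K : Set (EuclideanSpace ℝ (Fin d))) (x : Fin d → ℤ) (n : ℕ) :
    P (stayEvent X K x n)
      = ∑' y : Fin d → ℤ, P ({ω | x + walk X n ω = y} ∩ stayEvent X K x n) := by
  have hd : stayEvent X K x n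
      = ⋃ y : Fin d → ℤ, ({ω | x + walk X n ω = y} ∩ stayEvent X K x n) := by
    ext ω
    simp only [Set.mem_iUnion, Set.mem_inter_iff, Set.mem_setOf_eq]
    constructor
    · intro hst; exact ⟨x + walk X n ω, rfl, hst⟩
    · rintro ⟨y, _, hst⟩; exact hst
  have hdisj : Pairwise (Function.onFun Disjoint (fun y : Fin d → ℤ =>
      ({ω | x + walk X n ω = y} ∩ stayEvent X K x n))) := by
    intro z z' hzz'
    refine Set.disjoint_left.2 fun ω hω hω' => hzz' ?_
    rw [← hω.1, ← hω'.1]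
  calc P (stayEvent X K x n)
      = P (⋃ y : Fin d → ℤ, ({ω | x + walk X n ω = y} ∩ stayEvent X K x n)) := by rw [← hd]
    _ = ∑' y : Fin d → ℤ, P ({ω | x + walk X n ω = y} ∩ stayEvent X K x n) :=
        measure_iUnion hdisj (fun y => hitstay_meas X hXmeas K x y n)

end AuxLemmas

/-- `μ(y) = κ e^{−h·y} W(y)` is a probability distribution on `K∩ℤ^d`
satisfying `Σ_x μ(x) ℙ(x + X = y) = c μ(y)`; consequently
`Σ_x μ(x) ℙ(x + S(n) = y, τ_x > n) = c^n μ(y)`, `Σ_x μ(x) ℙ(τ_x > n) = c^n`, and `μ` is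
quasistationary. -/
theorem stmt9 {d : ℕ} (hd : 1 ≤ d) {Ω : Type*} [MeasurableSpace Ω]
    (P : Measure Ω) [IsProbabilityMeasure P]
    (X : ℕ → Ω → (Fin d → ℤ))
    (hXmeas : ∀ n, Measurable (X n))
    (hXindep : iIndepFun X P)
    (hXident : ∀ n, IdentDistrib (X n) (X 0) P P)
    (K : Set (EuclideanSpace ℝ (Fin d))) (h : EuclideanSpace ℝ (Fin d)) (c : ℝ)
    (hint : Integrable (fun ω => Real.exp (dotZ h (X 0 ω))) P)
    (hc : c = ∫ ω, Real.exp (dotZ h (X 0 ω)) ∂P) (hcpos : 0 < c)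
    (W : (Fin d → ℤ) → ℝ) (hW : ∀ y, embZ d y ∈ K → 0 < W y)
    -- harmonicity: `W(y) = (1/c) Σ_{x∈K∩ℤ^d} e^{h·(y−x)} ℙ(X = y−x) W(x)`
    (hharmsum : ∀ y : Fin d → ℤ, embZ d y ∈ K →
      Summable (fun x : Fin d → ℤ => if embZ d x ∈ K then
        Real.exp (dotZ h (y - x)) * (P {ω | X 0 ω = y - x}).toReal * W x else 0))
    (hharm : ∀ y : Fin d → ℤ, embZ d y ∈ K →
      W y = (1 / c) * ∑' x : Fin d → ℤ, if embZ d x ∈ K then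
        Real.exp (dotZ h (y - x)) * (P {ω | X 0 ω = y - x}).toReal * W x else 0)
    -- `0 < Σ_{y∈K∩ℤ^d} e^{−h·y} W(y) < ∞`
    (hsum : Summable (fun y : Fin d → ℤ =>
      if embZ d y ∈ K then Real.exp (-dotZ h y) * W y else 0))
    (hsumpos : 0 < ∑' y : Fin d → ℤ,
      if embZ d y ∈ K then Real.exp (-dotZ h y) * W y else 0)
    (κ : ℝ) (μ : (Fin d → ℤ) → ℝ)
    (hκ : κ = (∑' y : Fin d → ℤ,
      if embZ d y ∈ K then Real.exp (-dotZ h y) * W y else 0)⁻¹)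
    (hμ : ∀ y, μ y = κ * Real.exp (-dotZ h y) * W y) :
    -- μ is a probability distribution on K∩ℤ^d
    (∑' y : Fin d → ℤ, if embZ d y ∈ K then μ y else 0) = 1 ∧
    -- one-step equation
    (∀ y : Fin d → ℤ, embZ d y ∈ K →
      (∑' x : Fin d → ℤ,
        if embZ d x ∈ K then μ x * (P {ω | x + X 0 ω = y}).toReal else 0) = c * μ y) ∧
    -- n-step equation
    (∀ n : ℕ, 1 ≤ n → ∀ y : Fin d → ℤ, embZ d y ∈ K →
      (∑' x : Fin d → ℤ, if embZ d x ∈ K then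
        μ x * (P ({ω | x + walk X n ω = y} ∩ stayEvent X K x n)).toReal else 0)
        = c ^ n * μ y) ∧
    -- survival probability under μ
    (∀ n : ℕ, 1 ≤ n →
      (∑' x : Fin d → ℤ,
        if embZ d x ∈ K then μ x * (P (stayEvent X K x n)).toReal else 0) = c ^ n) ∧
    -- quasistationarity
    (∀ n : ℕ, 1 ≤ n → ∀ y : Fin d → ℤ, embZ d y ∈ K →
      (∑' x : Fin d → ℤ, if embZ d x ∈ K then
          μ x * (P ({ω | x + walk X n ω = y} ∩ stayEvent X K x n)).toReal else 0) /
        (∑' x : Fin d → ℤ,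
          if embZ d x ∈ K then μ x * (P (stayEvent X K x n)).toReal else 0)
        = μ y) := by
  have hcne : c ≠ 0 := ne_of_gt hcpos
  have hSne : (∑' y : Fin d → ℤ,
      if embZ d y ∈ K then Real.exp (-dotZ h y) * W y else 0) ≠ 0 := ne_of_gt hsumpos
  have hκpos : 0 < κ := by rw [hκ]; exact inv_pos.2 hsumpos
  have hμnonnegK : ∀ x, embZ d x ∈ K → 0 ≤ μ x := by
    intro x hx
    rw [hμ]
    exact le_of_lt (mul_pos (mul_pos hκpos (Real.exp_pos _)) (hW x hx))
  -- ν is the indicator version of μ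
  have hνeq : (fun x => if embZ d x ∈ K then μ x else 0)
      = fun x => κ * (if embZ d x ∈ K then Real.exp (-dotZ h x) * W x else 0) := by
    funext x
    split
    · rw [hμ]; ring
    · rw [mul_zero]
  have hν : Summable (fun x => if embZ d x ∈ K then μ x else 0) := by
    rw [hνeq]; exact hsum.mul_left κ
  have part1 : (∑' y : Fin d → ℤ, if embZ d y ∈ K then μ y else 0) = 1 := by
    rw [hνeq, tsum_mul_left, hκ, inv_mul_cancel₀ hSne]
  -- translating the one-step event
  have hsetx : ∀ x y : Fin d → ℤ, {ω | x + X 0 ω = y} = {ω | X 0 ω = y - x} := by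
    intro x y
    ext ω
    simp only [Set.mem_setOf_eq]
    constructor
    · intro hh; rw [← hh]; abel
    · intro hh; rw [hh]; abel
  -- the one-step equation
  have onestep : ∀ y, embZ d y ∈ K →
      (∑' x : Fin d → ℤ,
        if embZ d x ∈ K then μ x * (P {ω | X 0 ω = y - x}).toReal else 0) = c * μ y := by
    intro y hy
    have hterm : ∀ x, (if embZ d x ∈ K then μ x * (P {ω | X 0 ω = y - x}).toReal else 0)
        = (κ * Real.exp (-dotZ h y)) * (if embZ d x ∈ K then
            Real.exp (dotZ h (y - x)) * (P {ω | X 0 ω = y - x}).toReal * W x else 0) := by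
      intro x
      split
      · rw [hμ]
        have he : Real.exp (-dotZ h x) = Real.exp (-dotZ h y) * Real.exp (dotZ h (y - x)) := by
          rw [← Real.exp_add, dotZ_sub]; ring_nf
        rw [he]; ring
      · rw [mul_zero]
    rw [tsum_congr hterm, tsum_mul_left]
    have hsum_eval : (∑' x : Fin d → ℤ, if embZ d x ∈ K then
        Real.exp (dotZ h (y - x)) * (P {ω | X 0 ω = y - x}).toReal * W x else 0) = c * W y := by
      have hh := hharm y hy
      rw [hh]; field_simp
    rw [hsum_eval, hμ y]; ring
  have part2 : ∀ y : Fin d → ℤ, embZ d y ∈ K →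
      (∑' x : Fin d → ℤ,
        if embZ d x ∈ K then μ x * (P {ω | x + X 0 ω = y}).toReal else 0) = c * μ y := by
    intro y hy
    rw [← onestep y hy]
    exact tsum_congr fun x => by rw [hsetx x y]
  -- basic facts about probabilities
  have hPle1 : ∀ s : Set Ω, (P s).toReal ≤ 1 := by
    intro s
    have h1 : P s ≤ 1 := prob_le_one
    calc (P s).toReal ≤ (1 : ENNReal).toReal := ENNReal.toReal_mono ENNReal.one_ne_top h1
      _ = 1 := ENNReal.toReal_one
  -- vanishing off K
  have hAzero : ∀ n (x z : Fin d → ℤ), embZ d z ∉ K →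
      P ({ω | x + walk X n ω = z} ∩ stayEvent X K x n) = 0 := by
    intro n x z hz
    have hempty : {ω | x + walk X n ω = z} ∩ stayEvent X K x n = ∅ := by
      ext ω
      simp only [Set.mem_inter_iff, Set.mem_setOf_eq, Set.mem_empty_iff_false, iff_false,
        not_and, stayEvent]
      intro h1 h2
      exact hz (h1 ▸ h2 n le_rfl)
    rw [hempty, measure_empty]
  -- summability of the indicator sums against μ
  have hsummA : ∀ (f : (Fin d → ℤ) → Set Ω),
      Summable (fun x => if embZ d x ∈ K then μ x * (P (f x)).toReal else 0) := by
    intro f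
    refine Summable.of_nonneg_of_le (fun x => ?_) (fun x => ?_) hν
    · split
      · exact mul_nonneg (hμnonnegK _ (by assumption)) ENNReal.toReal_nonneg
      · exact le_refl 0
    · split
      · calc μ _ * (P (f _)).toReal ≤ μ _ * 1 :=
            mul_le_mul_of_nonneg_left (hPle1 _) (hμnonnegK _ (by assumption))
          _ = μ _ := mul_one _
      · exact le_refl 0
  -- real Chapman-Kolmogorov
  have chapR : ∀ n (x y : Fin d → ℤ), embZ d y ∈ K →
      ((P ({ω | x + walk X (n+1) ω = y} ∩ stayEvent X K x (n+1))).toReal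
        = ∑' z : Fin d → ℤ, (P ({ω | x + walk X n ω = z} ∩ stayEvent X K x n)).toReal
          * (P {ω | X 0 ω = y - z}).toReal)
      ∧ Summable (fun z : Fin d → ℤ =>
          (P ({ω | x + walk X n ω = z} ∩ stayEvent X K x n)).toReal
            * (P {ω | X 0 ω = y - z}).toReal) := by
    intro n x y hy
    have hch := chapman P X hXmeas hXindep hXident K x y hy n
    have hne : ∀ z : Fin d → ℤ,
        P ({ω | x + walk X n ω = z} ∩ stayEvent X K x n) * P {ω | X 0 ω = y - z} ≠ ⊤ :=
      fun z => ENNReal.mul_ne_top (measure_ne_top P _) (measure_ne_top P _)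
    constructor
    · rw [hch, ENNReal.tsum_toReal_eq hne]
      exact tsum_congr fun z => ENNReal.toReal_mul
    · have hne' : (∑' z : Fin d → ℤ,
          P ({ω | x + walk X n ω = z} ∩ stayEvent X K x n) * P {ω | X 0 ω = y - z}) ≠ ⊤ := by
        rw [← hch]; exact measure_ne_top P _
      have hsm := ENNReal.summable_toReal hne'
      simpa only [ENNReal.toReal_mul] using hsm
  -- the key induction
  have key : ∀ n : ℕ, ∀ y : Fin d → ℤ, embZ d y ∈ K →
      (∑' x : Fin d → ℤ, if embZ d x ∈ K then
        μ x * (P ({ω | x + walk X (n+1) ω = y} ∩ stayEvent X K x (n+1))).toReal else 0)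
        = c ^ (n+1) * μ y := by
    intro n
    induction n with
    | zero =>
      intro y hy
      have hbase : ∀ x : Fin d → ℤ, embZ d x ∈ K →
          P ({ω | x + walk X 1 ω = y} ∩ stayEvent X K x 1) = P {ω | X 0 ω = y - x} := by
        intro x hx
        congr 1
        ext ω
        simp only [Set.mem_inter_iff, Set.mem_setOf_eq, stayEvent]
        constructor
        · rintro ⟨h1, _⟩
          rw [walk_one] at h1
          rw [← h1]; abel
        · intro h1
          have hw : x + walk X 1 ω = y := by rw [walk_one, h1]; abel
          refine ⟨hw, fun k hk => ?_⟩
          interval_cases k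
          · rw [walk_zero, add_zero]; exact hx
          · rw [hw]; exact hy
      have : (∑' x : Fin d → ℤ, if embZ d x ∈ K then
          μ x * (P ({ω | x + walk X 1 ω = y} ∩ stayEvent X K x 1)).toReal else 0)
          = ∑' x : Fin d → ℤ,
            if embZ d x ∈ K then μ x * (P {ω | X 0 ω = y - x}).toReal else 0 := by
        refine tsum_congr fun x => ?_
        split
        · rw [hbase x (by assumption)]
        · rfl
      rw [this, onestep y hy, pow_one]
    | succ m ih =>
      intro y hy
      -- notation
      set A : ℕ → (Fin d → ℤ) → (Fin d → ℤ) → ℝ := fun n x z =>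
        (P ({ω | x + walk X n ω = z} ∩ stayEvent X K x n)).toReal with hAdef
      set p : (Fin d → ℤ) → ℝ := fun w => (P {ω | X 0 ω = w}).toReal with hpdef
      set F : (Fin d → ℤ) → (Fin d → ℤ) → ℝ := fun x z =>
        (if embZ d x ∈ K then μ x else 0) * (A (m+1) x z * p (y - z)) with hFdef
      have hFnonneg : ∀ q : (Fin d → ℤ) × (Fin d → ℤ), 0 ≤ Function.uncurry F q := by
        rintro ⟨x, z⟩
        refine mul_nonneg ?_ (mul_nonneg ENNReal.toReal_nonneg ENNReal.toReal_nonneg)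
        split
        · exact hμnonnegK _ (by assumption)
        · exact le_refl 0
      have hrows : ∀ x : Fin d → ℤ, Summable (fun z => F x z) :=
        fun x => ((chapR (m+1) x y hy).2).mul_left _
      have hrowsum : ∀ x : Fin d → ℤ, (∑' z : Fin d → ℤ, F x z)
          = if embZ d x ∈ K then μ x * A (m+2) x y else 0 := by
        intro x
        rw [tsum_mul_left, ← (chapR (m+1) x y hy).1]
        split
        · rfl
        · rw [zero_mul]
      have hrowsummable : Summable (fun x => ∑' z : Fin d → ℤ, F x z) := by
        have := hsummA (fun x => {ω | x + walk X (m+2) ω = y} ∩ stayEvent X K x (m+2))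
        refine this.congr fun x => ?_
        rw [hrowsum x]
      have hF : Summable (Function.uncurry F) :=
        (summable_prod_of_nonneg hFnonneg).2 ⟨fun x => hrows x, hrowsummable⟩
      have hswap : (∑' x : Fin d → ℤ, ∑' z : Fin d → ℤ, F x z)
          = ∑' z : Fin d → ℤ, ∑' x : Fin d → ℤ, F x z := (Summable.tsum_comm hF).symm
      have hcolsum : ∀ z : Fin d → ℤ, (∑' x : Fin d → ℤ, F x z)
          = (if embZ d z ∈ K then c ^ (m+1) * μ z else 0) * p (y - z) := by
        intro z
        have hFxz : ∀ x, F x z = (if embZ d x ∈ K then μ x * A (m+1) x z else 0) * p (y - z) := by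
          intro x
          by_cases hx : embZ d x ∈ K
          · simp only [hFdef, if_pos hx]; ring
          · simp only [hFdef, if_neg hx, zero_mul]
        rw [tsum_congr hFxz, tsum_mul_right]
        congr 1
        by_cases hz : embZ d z ∈ K
        · rw [if_pos hz, ← ih z hz]
        · rw [if_neg hz]
          have hzero : ∀ x, (if embZ d x ∈ K then μ x * A (m+1) x z else 0) = 0 := by
            intro x
            split
            · rw [hAdef]; simp only []
              rw [hAzero (m+1) x z hz, ENNReal.toReal_zero, mul_zero]
            · rfl
          rw [tsum_congr hzero, tsum_zero]
      have hfinal : (∑' z : Fin d → ℤ,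
          (if embZ d z ∈ K then c ^ (m+1) * μ z else 0) * p (y - z))
          = c ^ (m+1) * (c * μ y) := by
        have hterm : ∀ z, (if embZ d z ∈ K then c ^ (m+1) * μ z else 0) * p (y - z)
            = c ^ (m+1) * (if embZ d z ∈ K then μ z * p (y - z) else 0) := by
          intro z
          split
          · ring
          · rw [zero_mul, mul_zero]
        rw [tsum_congr hterm, tsum_mul_left, onestep y hy]
      calc (∑' x : Fin d → ℤ, if embZ d x ∈ K then
            μ x * (P ({ω | x + walk X (m+1+1) ω = y} ∩ stayEvent X K x (m+1+1))).toReal else 0)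
          = ∑' x : Fin d → ℤ, ∑' z : Fin d → ℤ, F x z := by
            refine tsum_congr fun x => ?_
            rw [hrowsum x]
        _ = ∑' z : Fin d → ℤ, ∑' x : Fin d → ℤ, F x z := hswap
        _ = ∑' z : Fin d → ℤ,
            (if embZ d z ∈ K then c ^ (m+1) * μ z else 0) * p (y - z) :=
            tsum_congr fun z => hcolsum z
        _ = c ^ (m+1) * (c * μ y) := hfinal
        _ = c ^ (m+2) * μ y := by ring
  have part3 : ∀ n : ℕ, 1 ≤ n → ∀ y : Fin d → ℤ, embZ d y ∈ K →
      (∑' x : Fin d → ℤ, if embZ d x ∈ K then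
        μ x * (P ({ω | x + walk X n ω = y} ∩ stayEvent X K x n)).toReal else 0)
        = c ^ n * μ y := by
    intro n hn y hy
    obtain ⟨m, rfl⟩ : ∃ m, n = m + 1 := ⟨n - 1, by omega⟩
    exact key m y hy
  -- survival probability
  have part4 : ∀ n : ℕ, 1 ≤ n →
      (∑' x : Fin d → ℤ,
        if embZ d x ∈ K then μ x * (P (stayEvent X K x n)).toReal else 0) = c ^ n := by
    intro n hn
    set A : (Fin d → ℤ) → (Fin d → ℤ) → ℝ := fun x z =>
      (P ({ω | x + walk X n ω = z} ∩ stayEvent X K x n)).toReal with hAdef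
    set G : (Fin d → ℤ) → (Fin d → ℤ) → ℝ := fun x z =>
      (if embZ d x ∈ K then μ x else 0) * A x z with hGdef
    have hstR : ∀ x : Fin d → ℤ,
        (P (stayEvent X K x n)).toReal = ∑' z : Fin d → ℤ, A x z := by
      intro x
      rw [stay_decomp P X hXmeas K x n,
        ENNReal.tsum_toReal_eq (fun z => measure_ne_top P _)]
    have hstS : ∀ x : Fin d → ℤ, Summable (fun z => A x z) := by
      intro x
      refine ENNReal.summable_toReal ?_
      rw [← stay_decomp P X hXmeas K x n]
      exact measure_ne_top P _
    have hGnonneg : ∀ q : (Fin d → ℤ) × (Fin d → ℤ), 0 ≤ Function.uncurry G q := by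
      rintro ⟨x, z⟩
      refine mul_nonneg ?_ ENNReal.toReal_nonneg
      split
      · exact hμnonnegK _ (by assumption)
      · exact le_refl 0
    have hrows : ∀ x : Fin d → ℤ, Summable (fun z => G x z) :=
      fun x => (hstS x).mul_left _
    have hrowsum : ∀ x : Fin d → ℤ, (∑' z : Fin d → ℤ, G x z)
        = if embZ d x ∈ K then μ x * (P (stayEvent X K x n)).toReal else 0 := by
      intro x
      rw [tsum_mul_left, ← hstR x]
      split
      · rfl
      · rw [zero_mul]
    have hrowsummable : Summable (fun x => ∑' z : Fin d → ℤ, G x z) := by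
      have := hsummA (fun x => stayEvent X K x n)
      refine this.congr fun x => ?_
      rw [hrowsum x]
    have hG : Summable (Function.uncurry G) :=
      (summable_prod_of_nonneg hGnonneg).2 ⟨fun x => hrows x, hrowsummable⟩
    have hswap : (∑' x : Fin d → ℤ, ∑' z : Fin d → ℤ, G x z)
        = ∑' z : Fin d → ℤ, ∑' x : Fin d → ℤ, G x z := (Summable.tsum_comm hG).symm
    have hcolsum : ∀ z : Fin d → ℤ, (∑' x : Fin d → ℤ, G x z)
        = if embZ d z ∈ K then c ^ n * μ z else 0 := by
      intro z
      have hGxz : ∀ x, G x z = if embZ d x ∈ K then μ x * A x z else 0 := by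
        intro x
        by_cases hx : embZ d x ∈ K
        · simp only [hGdef, if_pos hx]
        · simp only [hGdef, if_neg hx, zero_mul]
      rw [tsum_congr hGxz]
      by_cases hz : embZ d z ∈ K
      · rw [if_pos hz]
        exact part3 n hn z hz
      · rw [if_neg hz]
        have hzero : ∀ x, (if embZ d x ∈ K then μ x * A x z else 0) = 0 := by
          intro x
          split
          · rw [hAdef]; simp only []
            rw [hAzero n x z hz, ENNReal.toReal_zero, mul_zero]
          · rfl
        rw [tsum_congr hzero, tsum_zero]
    calc (∑' x : Fin d → ℤ,
          if embZ d x ∈ K then μ x * (P (stayEvent X K x n)).toReal else 0)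
        = ∑' x : Fin d → ℤ, ∑' z : Fin d → ℤ, G x z := by
          refine tsum_congr fun x => ?_
          rw [hrowsum x]
      _ = ∑' z : Fin d → ℤ, ∑' x : Fin d → ℤ, G x z := hswap
      _ = ∑' z : Fin d → ℤ, (if embZ d z ∈ K then c ^ n * μ z else 0) :=
          tsum_congr fun z => hcolsum z
      _ = c ^ n * ∑' z : Fin d → ℤ, (if embZ d z ∈ K then μ z else 0) := by
          rw [← tsum_mul_left]
          refine tsum_congr fun z => ?_
          split
          · rfl
          · rw [mul_zero]
      _ = c ^ n := by rw [part1, mul_one]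
  refine ⟨part1, part2, part3, part4, ?_⟩
  intro n hn y hy
  rw [part3 n hn y hy, part4 n hn]
  exact mul_div_cancel_left₀ _ (pow_ne_zero n hcne)
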